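/- The SPO+ loss upper bounds the SPO loss: for all ĉ, c ∈ ℝ^d, ℓ_SPO(ĉ, c) ≤ ℓ_SPO+(ĉ, c), where ℓ_SPO(ĉ, c) := max_{w ∈ W*(ĉ)} cᵀw − z*(c) and ℓ_SPO+(ĉ, c) := ξ_S(c − 2ĉ) + 2ĉᵀw*(c) − z*(c). -/
import Mathlib


open MeasureTheory Set

noncomputable section

/-- Dot product on `Fin d → ℝ`. -/
def dotp {d : ℕ} (c w : Fin d → ℝ) : ℝ := ∑ i, c i * w i

/-- Optimal value `z*(c) = min_{w ∈ S} cᵀw`. -/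
def zS {d : ℕ} (S : Set (Fin d → ℝ)) (c : Fin d → ℝ) : ℝ := sInf ((fun w => dotp c w) '' S)

/-- Support function `ξ_S(c) = max_{w ∈ S} cᵀw`. -/
def xiS {d : ℕ} (S : Set (Fin d → ℝ)) (c : Fin d → ℝ) : ℝ := sSup ((fun w => dotp c w) '' S)

/-- Optimal solution set `W*(c) = argmin_{w ∈ S} cᵀw`. -/
def WS {d : ℕ} (S : Set (Fin d → ℝ)) (c : Fin d → ℝ) : Set (Fin d → ℝ) :=
  {w | w ∈ S ∧ ∀ u ∈ S, dotp c w ≤ dotp c u}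

/-- SPO loss `ℓ_SPO(ĉ, c) = max_{w ∈ W*(ĉ)} cᵀw − z*(c)`. -/
def lSPO {d : ℕ} (S : Set (Fin d → ℝ)) (chat c : Fin d → ℝ) : ℝ :=
  sSup ((fun w => dotp c w) '' WS S chat) - zS S c

/-- SPO+ loss `ℓ_SPO+(ĉ, c) = ξ_S(c − 2ĉ) + 2ĉᵀw*(c) − z*(c)` given a selection `wstar`. -/
def lSPOp {d : ℕ} (S : Set (Fin d → ℝ)) (wstar : (Fin d → ℝ) → (Fin d → ℝ))
    (chat c : Fin d → ℝ) : ℝ :=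
  xiS S (c - (2 : ℝ) • chat) + 2 * dotp chat (wstar c) - zS S c


lemma dotp_cont {d : ℕ} (v : Fin d → ℝ) : Continuous (fun w : Fin d → ℝ => dotp v w) := by
  unfold dotp
  exact continuous_finset_sum _ fun i _ => (continuous_const.mul (continuous_apply i))

lemma dotp_sub {d : ℕ} (c chat w : Fin d → ℝ) :
    dotp (c - (2 : ℝ) • chat) w = dotp c w - 2 * dotp chat w := by
  simp [dotp, sub_mul, Finset.sum_sub_distrib, Finset.mul_sum, mul_assoc]

/-- the SPO+ loss upper bounds the SPO loss. -/
theorem spo_plus_upper_bounds_spo {d : ℕ} (S : Set (Fin d → ℝ))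
    (hS : S.Nonempty) (hSc : IsCompact S) (hScv : Convex ℝ S)
    (wstar : (Fin d → ℝ) → (Fin d → ℝ)) (hw : ∀ v, wstar v ∈ WS S v)
    (chat c : Fin d → ℝ) :
    lSPO S chat c ≤ lSPOp S wstar chat c := by
  have hbdd : BddAbove ((fun w => dotp (c - (2:ℝ) • chat) w) '' S) :=
    ((hSc.image (dotp_cont _)).isBounded).bddAbove
  have hws := hw c
  have key : ∀ w ∈ WS S chat, dotp c w ≤ xiS S (c - (2:ℝ) • chat) + 2 * dotp chat (wstar c) := by
    intro w hwW
    have h1 : dotp (c - (2:ℝ) • chat) w ≤ xiS S (c - (2:ℝ) • chat) :=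
      le_csSup hbdd ⟨w, hwW.1, rfl⟩
    have h2 : dotp chat w ≤ dotp chat (wstar c) := hwW.2 _ (hws.1)
    have := dotp_sub c chat w
    nlinarith
  have hne : ((fun w => dotp c w) '' WS S chat).Nonempty := ⟨_, ⟨wstar chat, hw chat, rfl⟩⟩
  have : sSup ((fun w => dotp c w) '' WS S chat) ≤ xiS S (c - (2:ℝ) • chat) + 2 * dotp chat (wstar c) := by
    apply csSup_le hne
    rintro x ⟨w, hwW, rfl⟩
    exact key w hwW
  unfold lSPO lSPOp
  linarith
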